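/- arXiv:2002.05834 — 2 statements merged into one kernel-verified Lean document; each statement's English description precedes it below -/
import Mathlib

section
/- Let p, q be primes with p > q, n = kq+1 with p > n, a the unique integer with 1 ≤ a < q and q | (ap−1), M = (ap−1)/q. Over the field F_p(z) of rational functions in z_1,...,z_n, the intersection of the n-dimensional space Ω_log = span{Φ(x,z)/(x−z_j) : j=1,...,n} with the image of the derivative map ∂/∂x on polynomials in x of degree at most Mn has dimension (q−a)·k + 1. -/
/-!
Write `N = ∏ᵢ (x - zᵢ)`, so that `Φ/(x - z_j) = N ^ (M - 1) · ∏_{i ≠ j} (x - zᵢ)`. These `n`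
polynomials have degree `< Mn` and are linearly independent (evaluate the Lagrange factors at
the nodes). In characteristic `p`, a polynomial of degree `< Mn` is the derivative of one of
degree `≤ Mn` iff its coefficients of `x ^ (tp - 1)`, `1 ≤ t ≤ ⌊Mn/p⌋`, vanish, so the dimension
is `n - ⌊Mn/p⌋` as soon as some maximal minor of the matrix of these coefficients is nonzero.
Specialising `z_j ↦ ζ ^ j` for a primitive `n`-th root of unity `ζ` (it exists as `p ∤ n`) turns
`N` into `x ^ n - 1` and `∏_{i ≠ j} (x - ζ ^ i)` into `∑ₛ ζ ^ (j (n - 1 - s)) x ^ s`, so the minor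
on the first columns becomes a diagonal matrix of signed binomial coefficients
`(M - 1).choose e`, nonzero as `M ≤ p`, times a Vandermonde matrix in the powers
`ζ ^ (n - 1 - (tp - 1) % n)`, which are distinct as `p ∤ n`.
For the parameters of the theorem, `Mn = akp + (M - k)` with `0 ≤ M - k < p`, so `⌊Mn/p⌋ = ak`.
-/

open Polynomial Finset

/-- `Φ(x)/(x−z_i)^r` as a polynomial: the exponent of `(x − z_i)` is lowered by `r`. -/
noncomputable def phiQuot {K : Type*} [Field K] (n M : ℕ) (z : Fin n → K)
    (i : Fin n) (r : ℕ) : K[X] :=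
  (X - C (z i)) ^ (M - r) * ∏ a ∈ univ.erase i, (X - C (z a)) ^ M

open Lagrange Module Submodule

theorem coeff_X_sub_one_pow {R : Type*} [CommRing R] (m e : ℕ) :
    ((X - 1 : R[X]) ^ m).coeff e = (-1) ^ (m - e) * (m.choose e : R) := by
  simpa [sub_eq_add_neg] using coeff_X_add_C_pow (-1 : R) m e

theorem coeff_expand_mul_sum_C_mul_X_pow {R : Type*} [CommRing R] {n : ℕ} (hn : 0 < n)
    (f : R[X]) (c : ℕ → R) (d : ℕ) :
    (expand R n f * ∑ s ∈ range n, C (c s) * X ^ s).coeff d = f.coeff (d / n) * c (d % n) := by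
  simp only [mul_sum, finsetSum_coeff, mul_left_comm _ (C _), coeff_C_mul, coeff_mul_X_pow']
  rw [sum_eq_single (d % n)]
  · rw [if_pos (Nat.mod_le d n), coeff_expand hn, if_pos (Nat.dvd_sub_mod d),
      ← Nat.div_eq_sub_mod_div, mul_comm]
  · intro s hs hsd
    split_ifs with hle
    · rw [coeff_expand hn, if_neg, mul_zero]
      intro hdvd
      have hmod := (Nat.modEq_iff_dvd' hle).mpr hdvd
      exact hsd (by rw [← Nat.mod_eq_of_lt (mem_range.mp hs)]; exact hmod)
    · rw [mul_zero]
  · exact fun h => absurd (mem_range.mpr (Nat.mod_lt d hn)) h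

theorem IsPrimitiveRoot.nodal_pow_eq {L : Type*} [CommRing L] [IsDomain L] {ζ : L} {n : ℕ}
    (hζ : IsPrimitiveRoot ζ n) (hn : 0 < n) :
    nodal univ (fun i : Fin n => ζ ^ (i : ℕ)) = X ^ n - 1 := by
  rw [← C_1, X_pow_sub_C_eq_prod hζ hn (one_pow n), nodal, ← Fin.prod_univ_eq_prod_range]
  simp

theorem IsPrimitiveRoot.nodal_erase_pow_eq {L : Type*} [CommRing L] [IsDomain L] {ζ : L} {n : ℕ}
    (hζ : IsPrimitiveRoot ζ n) (j : Fin n) :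
    nodal (univ.erase j) (fun i : Fin n => ζ ^ (i : ℕ)) =
      ∑ s ∈ range n, C ((ζ ^ (j : ℕ)) ^ (n - 1 - s)) * X ^ s := by
  apply mul_left_cancel₀ (X_sub_C_ne_zero (ζ ^ (j : ℕ)))
  rw [← nodal_eq_mul_nodal_erase (v := fun i : Fin n => ζ ^ (i : ℕ)) (mem_univ j),
    hζ.nodal_pow_eq j.pos, mul_comm]
  have hw : (C (ζ ^ (j : ℕ))) ^ n = 1 := by
    rw [← C_pow, ← pow_mul, mul_comm, pow_mul, hζ.pow_eq_one, one_pow, C_1]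
  have hgeom := geom_sum₂_mul X (C (ζ ^ (j : ℕ))) n
  rw [hw] at hgeom
  rw [← hgeom]
  exact congrArg (· * _) (sum_congr rfl fun s _ => by simp only [C_pow, mul_comm])

theorem IsPrimitiveRoot.coeff_nodal_pow_mul_nodal_erase {L : Type*} [CommRing L] [IsDomain L]
    {ζ : L} {n : ℕ} (hζ : IsPrimitiveRoot ζ n) (e : ℕ) (j : Fin n) (d : ℕ) :
    (nodal univ (fun i : Fin n => ζ ^ (i : ℕ)) ^ e *
        nodal (univ.erase j) (fun i : Fin n => ζ ^ (i : ℕ))).coeff d =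
      (-1) ^ (e - d / n) * (e.choose (d / n) : L) * (ζ ^ (n - 1 - d % n)) ^ (j : ℕ) := by
  have hexp : (X ^ n - 1 : L[X]) ^ e = expand L n ((X - 1) ^ e) := by simp
  rw [hζ.nodal_pow_eq j.pos, hζ.nodal_erase_pow_eq, hexp,
    coeff_expand_mul_sum_C_mul_X_pow j.pos, coeff_X_sub_one_pow, ← pow_mul, ← pow_mul]
  ring

noncomputable def nodalCoeffMatrix {R : Type*} [CommRing R] {n m : ℕ} (hm : m ≤ n)
    (z : Fin n → R) (e : ℕ) (d : Fin m → ℕ) : Matrix (Fin m) (Fin m) R :=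
  Matrix.of fun t u => (nodal univ z ^ e * nodal (univ.erase (Fin.castLE hm u)) z).coeff (d t)

theorem nodalCoeffMatrix_map {R S : Type*} [CommRing R] [CommRing S] (f : R →+* S) {n m : ℕ}
    (hm : m ≤ n) (z : Fin n → R) (e : ℕ) (d : Fin m → ℕ) :
    (nodalCoeffMatrix hm z e d).map f = nodalCoeffMatrix hm (f ∘ z) e d := by
  ext t u
  simp [nodalCoeffMatrix, nodal, ← coeff_map, Polynomial.map_prod]

theorem IsPrimitiveRoot.nodalCoeffMatrix_eq {L : Type*} [CommRing L] [IsDomain L] {ζ : L}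
    {n m : ℕ} (hζ : IsPrimitiveRoot ζ n) (hm : m ≤ n) (e : ℕ) (d : Fin m → ℕ) :
    nodalCoeffMatrix hm (fun i => ζ ^ (i : ℕ)) e d =
      Matrix.diagonal (fun t => (-1) ^ (e - d t / n) * (e.choose (d t / n) : L)) *
        Matrix.vandermonde (fun t => ζ ^ (n - 1 - d t % n)) := by
  ext t u
  simp [nodalCoeffMatrix, hζ.coeff_nodal_pow_mul_nodal_erase]

theorem IsPrimitiveRoot.det_nodalCoeffMatrix_ne_zero {L : Type*} [CommRing L] [IsDomain L]
    {ζ : L} {n m : ℕ} (hζ : IsPrimitiveRoot ζ n) (hm : m ≤ n) (e : ℕ) {d : Fin m → ℕ}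
    (hd : Function.Injective fun t => d t % n) (hc : ∀ t, (e.choose (d t / n) : L) ≠ 0) :
    (nodalCoeffMatrix hm (fun i => ζ ^ (i : ℕ)) e d).det ≠ 0 := by
  rw [hζ.nodalCoeffMatrix_eq, Matrix.det_mul, Matrix.det_diagonal]
  refine mul_ne_zero (prod_ne_zero_iff.mpr fun t _ => mul_ne_zero (by simp) (hc t))
    (Matrix.det_vandermonde_ne_zero_iff.mpr fun t₁ t₂ h => hd ?_)
  have h₁ := Nat.mod_lt (d t₁) (t₁.pos.trans_le hm)
  have h₂ := Nat.mod_lt (d t₂) (t₁.pos.trans_le hm)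
  have := hζ.pow_inj (by omega) (by omega) h
  show d t₁ % n = d t₂ % n
  omega

theorem det_nodalCoeffMatrix_X_ne_zero {F : Type*} [Field F] {n m : ℕ} (hn : (n : F) ≠ 0)
    (hm : m ≤ n) (e : ℕ) {d : Fin m → ℕ} (hd : Function.Injective fun t => d t % n)
    (hc : ∀ t, (e.choose (d t / n) : F) ≠ 0) :
    (nodalCoeffMatrix hm (MvPolynomial.X : Fin n → MvPolynomial (Fin n) F) e d).det ≠ 0 := by
  have : NeZero (n : F) := ⟨hn⟩
  obtain ⟨ζ, hζ⟩ := HasEnoughRootsOfUnity.exists_primitiveRoot (AlgebraicClosure F) n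
  let σ : MvPolynomial (Fin n) F →+* AlgebraicClosure F :=
    MvPolynomial.eval₂Hom (algebraMap F _) fun i : Fin n => ζ ^ (i : ℕ)
  have hσ : σ ∘ MvPolynomial.X = fun i : Fin n => ζ ^ (i : ℕ) :=
    funext fun i => MvPolynomial.eval₂_X ..
  refine fun h => hζ.det_nodalCoeffMatrix_ne_zero hm e hd (fun t => ?_) ?_
  · simpa using (map_ne_zero (algebraMap F (AlgebraicClosure F))).mpr (hc t)
  · rw [← hσ, ← nodalCoeffMatrix_map, ← RingHom.mapMatrix_apply, ← RingHom.map_det, h,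
      map_zero]

theorem phiQuot_one_eq {K : Type*} [Field K] {n M : ℕ} (hM : 1 ≤ M) (z : Fin n → K)
    (j : Fin n) :
    phiQuot n M z j 1 = nodal univ z ^ (M - 1) * nodal (univ.erase j) z := by
  obtain ⟨m, rfl⟩ : ∃ m, M = m + 1 := ⟨M - 1, by omega⟩
  rw [phiQuot, nodal_eq_mul_nodal_erase (v := z) (mem_univ j), Nat.add_sub_cancel, mul_pow,
    nodal, prod_pow, pow_succ]
  ring

theorem phiQuot_one_mem_degreeLT {K : Type*} [Field K] {n M : ℕ} (hM : 1 ≤ M) (z : Fin n → K)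
    (j : Fin n) : phiQuot n M z j 1 ∈ degreeLT K (M * n) := by
  have := j.pos
  rw [mem_degreeLT, phiQuot_one_eq hM]
  refine degree_le_natDegree.trans_lt ?_
  rw [natDegree_mul (pow_ne_zero _ nodal_ne_zero) nodal_ne_zero, natDegree_pow, natDegree_nodal,
    natDegree_nodal, card_erase_of_mem (mem_univ j), card_univ, Fintype.card_fin]
  exact_mod_cast calc (M - 1) * n + (n - 1) < (M - 1) * n + n := by omega
    _ = M * n := by rw [← Nat.succ_mul, Nat.succ_eq_add_one, Nat.sub_add_cancel hM]

theorem linearIndependent_nodal_erase {K ι : Type*} [Field K] [Fintype ι] [DecidableEq ι]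
    {z : ι → K} (hz : Function.Injective z) :
    LinearIndependent K fun j => nodal (univ.erase j) z := by
  refine Fintype.linearIndependent_iff.mpr fun c hc j => ?_
  have heval := congrArg (eval (z j)) hc
  rw [eval_finsetSum, sum_eq_single j, eval_zero, eval_smul, smul_eq_mul] at heval
  · exact (mul_eq_zero.mp heval).resolve_right
      (eval_nodal_not_at_node fun i hi => hz.ne (mem_erase.mp hi).1.symm)
  · intro i _ hij
    rw [eval_smul, eval_nodal_at_node (mem_erase.mpr ⟨Ne.symm hij, mem_univ j⟩), smul_zero]
  · exact fun h => absurd (mem_univ j) h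

theorem linearIndependent_phiQuot_one {K : Type*} [Field K] {n M : ℕ} (hM : 1 ≤ M)
    {z : Fin n → K} (hz : Function.Injective z) :
    LinearIndependent K fun j => phiQuot n M z j 1 := by
  simp_rw [phiQuot_one_eq hM]
  exact (linearIndependent_nodal_erase hz).map'
    (LinearMap.mulLeft K (nodal univ z ^ (M - 1)))
    (LinearMap.ker_eq_bot.mpr (mul_right_injective₀ (pow_ne_zero _ nodal_ne_zero)))

/-- The generic point `z` of the paper: the variables `z_j` in `F(z_1, …, z_n)`. -/
noncomputable abbrev fractionX (F : Type*) [Field F] (n : ℕ) :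
    Fin n → FractionRing (MvPolynomial (Fin n) F) :=
  fun j => algebraMap (MvPolynomial (Fin n) F) _ (MvPolynomial.X j)

theorem fractionX_injective (F : Type*) [Field F] (n : ℕ) :
    Function.Injective (fractionX F n) :=
  (IsFractionRing.injective _ _).comp MvPolynomial.X_injective

theorem span_range_coeff_phiQuot_eq_top {F : Type*} [Field F] {n M m : ℕ} (hn : (n : F) ≠ 0)
    (hM : 1 ≤ M) (hm : m ≤ n) {d : Fin m → ℕ} (hd : Function.Injective fun t => d t % n)
    (hc : ∀ t, ((M - 1).choose (d t / n) : F) ≠ 0) :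
    span (FractionRing (MvPolynomial (Fin n) F))
      (Set.range fun j t => (phiQuot n M (fractionX F n) j 1).coeff (d t)) = ⊤ := by
  have hA : (nodalCoeffMatrix hm (fractionX F n) (M - 1) d).det ≠ 0 := by
    rw [show fractionX F n = algebraMap _ _ ∘ MvPolynomial.X from rfl, ← nodalCoeffMatrix_map,
      ← RingHom.mapMatrix_apply, ← RingHom.map_det]
    exact (map_ne_zero_iff _ (IsFractionRing.injective _ _)).mpr
      (det_nodalCoeffMatrix_X_ne_zero hn hm (M - 1) hd hc)
  rw [eq_top_iff, ← (Matrix.linearIndependent_cols_of_det_ne_zero hA)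
    |>.span_eq_top_of_card_eq_finrank' (by simp)]
  refine span_mono (Set.range_subset_iff.mpr fun u => ⟨Fin.castLE hm u, ?_⟩)
  ext t
  simp [nodalCoeffMatrix, Matrix.col, phiQuot_one_eq hM]

theorem finrank_span_inf_ker_of_span_eq_top {K V W ι : Type*} [Field K] [AddCommGroup V]
    [Module K V] [AddCommGroup W] [Module K W] [FiniteDimensional K W] [Fintype ι] {v : ι → V}
    (hv : LinearIndependent K v) {f : V →ₗ[K] W} (hf : span K (Set.range (f ∘ v)) = ⊤) :
    finrank K ↥(span K (Set.range v) ⊓ LinearMap.ker f) = Fintype.card ι - finrank K W := by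
  set φ := Fintype.linearCombination K v
  have hker : span K (Set.range v) ⊓ LinearMap.ker f = map φ (LinearMap.ker (f ∘ₗ φ)) := by
    rw [LinearMap.ker_comp, map_comap_eq, Fintype.range_linearCombination]
  have hrange : LinearMap.range (f ∘ₗ φ) = ⊤ := by
    rw [LinearMap.range_comp, Fintype.range_linearCombination, map_span, ← Set.range_comp, hf]
  have hrank := (f ∘ₗ φ).finrank_range_add_finrank_ker
  rw [hrange, finrank_top, finrank_fintype_fun_eq_card] at hrank
  rw [hker, ← (equivMapOfInjective φ hv.fintypeLinearCombination_injective _).finrank_eq]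
  omega

theorem mem_map_derivative_degreeLT_iff {K : Type*} [Field K] (p : ℕ) [CharP K p] (D : ℕ)
    (f : K[X]) :
    f ∈ map derivative (degreeLT K (D + 1)) ↔
      f ∈ degreeLT K D ∧ ∀ j < D, p ∣ j + 1 → f.coeff j = 0 := by
  have hcast : ∀ j : ℕ, ((j : K) + 1 = 0 ↔ p ∣ j + 1) := fun j => by
    rw [← CharP.cast_eq_zero_iff K p]; push_cast; rfl
  simp only [mem_degreeLT, degree_lt_iff_coeff_zero]
  constructor
  · rintro ⟨g, hg, rfl⟩
    rw [SetLike.mem_coe, mem_degreeLT, degree_lt_iff_coeff_zero] at hg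
    refine ⟨fun j hj => ?_, fun j _ hpj => ?_⟩ <;> rw [coeff_derivative]
    · rw [hg (j + 1) (by exact_mod_cast Nat.succ_le_succ (by exact_mod_cast hj)), zero_mul]
    · rw [(hcast j).mpr hpj, mul_zero]
  · rintro ⟨hdeg, hvan⟩
    refine ⟨∑ j ∈ range D, C (f.coeff j / (j + 1)) * X ^ (j + 1), ?_, ?_⟩
    · exact sum_mem fun j hj => mem_degreeLT.mpr ((degree_C_mul_X_pow_le _ _).trans_lt
        (by exact_mod_cast Nat.succ_lt_succ (mem_range.mp hj)))
    · ext j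
      simp only [coeff_derivative, finsetSum_coeff, coeff_C_mul_X_pow, Nat.add_right_cancel_iff,
        sum_ite_eq, mem_range]
      split_ifs with hj
      · by_cases hp : p ∣ j + 1
        · rw [(hcast j).mpr hp, mul_zero, hvan j hj hp]
        · exact div_mul_cancel₀ _ (mt (hcast j).mp hp)
      · rw [zero_mul, hdeg j (by exact_mod_cast not_lt.mp hj)]

theorem forall_lt_dvd_succ_iff {p D : ℕ} {P : ℕ → Prop} :
    (∀ j < D, p ∣ j + 1 → P j) ↔ ∀ t : Fin (D / p), P ((t + 1) * p - 1) := by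
  constructor
  · intro h t
    have hp : 0 < p := Nat.pos_of_ne_zero fun hp => by simpa [hp] using t.pos
    have ht : (t + 1) * p ≤ D := (Nat.le_div_iff_mul_le hp).mp t.2
    have hpt : p ≤ (t + 1) * p := Nat.le_mul_of_pos_left p t.succ_pos
    refine h _ (by omega) ⟨t + 1, ?_⟩
    rw [Nat.sub_add_cancel (by omega), mul_comm]
  · rintro h j hj ⟨c, hc⟩
    have hc0 : 0 < c := Nat.pos_of_ne_zero fun h0 => by simp [h0] at hc
    have hp : 0 < p := Nat.pos_of_ne_zero fun h0 => by simp [h0] at hc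
    have hcD : c ≤ D / p := (Nat.le_div_iff_mul_le hp).mpr (by rw [mul_comm, ← hc]; omega)
    simpa [Nat.sub_add_cancel hc0, mul_comm, ← hc] using h ⟨c - 1, by omega⟩

theorem inf_map_derivative_degreeLT_eq {K : Type*} [Field K] (p : ℕ) [CharP K p] {D : ℕ}
    {U : Submodule K K[X]} (hU : U ≤ degreeLT K D) :
    U ⊓ map derivative (degreeLT K (D + 1)) =
      U ⊓ LinearMap.ker (LinearMap.pi fun t : Fin (D / p) => lcoeff K ((t + 1) * p - 1)) := by
  ext f
  simp only [Submodule.mem_inf, and_congr_right_iff]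
  intro hf
  rw [mem_map_derivative_degreeLT_iff p, forall_lt_dvd_succ_iff, LinearMap.mem_ker, funext_iff]
  simp [hU hf]

theorem injective_succ_mul_sub_one_mod {p n m : ℕ} (hp : 0 < p) (hpn : p.Coprime n)
    (hm : m ≤ n) :
    Function.Injective fun t : Fin m => ((t + 1) * p - 1) % n := by
  intro t₁ t₂ h
  have hpt : ∀ t : Fin m, 1 ≤ (t + 1) * p := fun t => Nat.one_le_iff_ne_zero.mpr (by positivity)
  have hmod : ((t₁ : ℕ) + 1) * p ≡ ((t₂ : ℕ) + 1) * p [MOD n] := by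
    simpa [Nat.sub_add_cancel (hpt _)] using Nat.ModEq.add_right 1 (show _ ≡ _ [MOD n] from h)
  have hmod' :=
    (Nat.ModEq.cancel_right_of_coprime (Nat.coprime_comm.mp hpn) hmod).add_right_cancel' 1
  exact Fin.ext (hmod'.eq_of_lt_of_lt (by omega) (by omega))

theorem finrank_span_phiQuot_inf_map_derivative {F : Type*} [Field F] {p : ℕ} [CharP F p]
    (hp : p.Prime) {n M : ℕ} (hpn : ¬ p ∣ n) (hM : 1 ≤ M) (hMp : M ≤ p) :
    finrank (FractionRing (MvPolynomial (Fin n) F))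
      ↥(span _ (Set.range fun j => phiQuot n M (fractionX F n) j 1) ⊓
        map derivative (degreeLT _ (M * n + 1))) = n - M * n / p := by
  have hn : 0 < n := Nat.pos_of_ne_zero fun h => hpn (h ▸ dvd_zero p)
  have hm : M * n / p ≤ n := Nat.div_le_of_le_mul (Nat.mul_le_mul_right n hMp)
  have hc : ∀ t : Fin (M * n / p), ((M - 1).choose (((t + 1) * p - 1) / n) : F) ≠ 0 := by
    intro t
    have ht : ((t : ℕ) + 1) * p ≤ M * n := (Nat.le_div_iff_mul_le hp.pos).mp t.2
    have he : ((t + 1) * p - 1) / n < M := (Nat.div_lt_iff_lt_mul hn).mpr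
      ((Nat.sub_lt (Nat.mul_pos (Nat.succ_pos _) hp.pos) one_pos).trans_le ht)
    rw [Ne, CharP.cast_eq_zero_iff F p]
    exact (Nat.Prime.coprime_iff_not_dvd hp).mp (hp.coprime_choose_of_lt (by omega) (by omega))
  have hspan := span_range_coeff_phiQuot_eq_top (mt (CharP.cast_eq_zero_iff F p n).mp hpn) hM hm
    (injective_succ_mul_sub_one_mod hp.pos ((Nat.Prime.coprime_iff_not_dvd hp).mpr hpn) hm) hc
  have hdeg : span (FractionRing (MvPolynomial (Fin n) F))
      (Set.range fun j => phiQuot n M (fractionX F n) j 1) ≤ degreeLT _ (M * n) :=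
    span_le.mpr (Set.range_subset_iff.mpr (phiQuot_one_mem_degreeLT hM _))
  rw [inf_map_derivative_degreeLT_eq p hdeg, finrank_span_inf_ker_of_span_eq_top
    (f := LinearMap.pi fun t : Fin (M * n / p) => lcoeff _ ((t + 1) * p - 1))
    (linearIndependent_phiQuot_one hM (fractionX_injective F n)) hspan,
    finrank_fintype_fun_eq_card, Fintype.card_fin, Fintype.card_fin]

theorem stmt14_general (p q n k a M : ℕ) [Fact p.Prime]
    (hn : n = k * q + 1) (hpn : p > n)
    (ha1 : 1 ≤ a) (ha2 : a < q) (hdvd : q ∣ (a * p - 1))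
    (hM : M = (a * p - 1) / q) :
    letI K := FractionRing (MvPolynomial (Fin n) (ZMod p))
    letI z : Fin n → K := fun j =>
      algebraMap (MvPolynomial (Fin n) (ZMod p)) K (MvPolynomial.X j)
    Module.finrank K
      ↥(Submodule.span K (Set.range fun j : Fin n => phiQuot n M z j 1) ⊓
        Submodule.map (Polynomial.derivative (R := K))
          (Polynomial.degreeLT K (M * n + 1)))
      = (q - a) * k + 1 := by
  have hp : p.Prime := Fact.out
  have hqM : q * M + 1 = a * p := by
    obtain ⟨c, hc⟩ := hdvd
    have : 0 < a * p := Nat.mul_pos (by omega) hp.pos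
    rw [hM, hc, Nat.mul_div_cancel_left _ (by omega)]
    omega
  have hM1 : 1 ≤ M := Nat.pos_of_ne_zero fun h => by
    rw [h, mul_zero] at hqM
    nlinarith [hp.two_le]
  have hMp : M < p := Nat.lt_of_mul_lt_mul_left (show q * M < q * p by nlinarith)
  have hkM : k ≤ M := Nat.le_of_mul_le_mul_left (show q * k ≤ q * M by nlinarith) (by omega)
  have hdiv : M * n / p = a * k := Nat.div_eq_of_lt_le (by nlinarith) (by nlinarith)
  have hpn' : ¬ p ∣ n := fun h => absurd (Nat.le_of_dvd (by omega) h) (by omega)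
  rw [finrank_span_phiQuot_inf_map_derivative hp hpn' hM1 hMp.le, hdiv, hn, Nat.sub_mul,
    mul_comm k q]
  have : a * k ≤ q * k := Nat.mul_le_mul_right k ha2.le
  omega

/-- Over `𝔽_p(z) = 𝔽_p(z_1,…,z_n)`, with `n = kq+1`, `p > n`,
`p > q`, `1 ≤ a < q`, `q ∣ ap−1`, `M = (ap−1)/q`, the intersection of
`Ω_log = span{Φ/(x−z_j)}` with the image under `∂/∂x` of the polynomials of
degree at most `Mn` has dimension `(q−a)·k + 1`. -/
theorem stmt14 (p q n k a M : ℕ) [Fact p.Prime] (hq : q.Prime)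
    (hk : 0 < k) (hn : n = k * q + 1) (hpn : p > n) (hpq : p > q)
    (ha1 : 1 ≤ a) (ha2 : a < q) (hdvd : q ∣ (a * p - 1))
    (hM : M = (a * p - 1) / q) :
    letI K := FractionRing (MvPolynomial (Fin n) (ZMod p))
    letI z : Fin n → K := fun j =>
      algebraMap (MvPolynomial (Fin n) (ZMod p)) K (MvPolynomial.X j)
    Module.finrank K
      ↥(Submodule.span K (Set.range fun j : Fin n => phiQuot n M z j 1) ⊓
        Submodule.map (Polynomial.derivative (R := K))
          (Polynomial.degreeLT K (M * n + 1)))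
      = (q - a) * k + 1 :=
  stmt14_general p q n k a M hn hpn ha1 ha2 hdvd hM
end

section
/- Let Q ∈ F_p(z)[x]_{≤Mn} be a polynomial in x of degree at most Mn, in the (n+1)-dimensional space spanned by Φ(x,z) and the polynomials Q_i(x,z), i=1,...,n. Then ∂Q/∂x = 0 if and only if Q lies in the span of the monomials x^{lp} with 0 ≤ lp ≤ Mn; in particular the kernel of ∂/∂x restricted to that space has dimension ak + 1. -/
/-!
Write `Φ = ∏ (x - z_i)^M`. In characteristic `p ≥ M`, a polynomial vanishing at `c` whose
derivative vanishes to order `M - 1` at `c` vanishes to order `M` there. Hence a polynomial of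
degree `≤ Mn` in `∂⁻¹(Ω_log)` that vanishes at every `z_i` and has no `x^{Mn}` term is divisible
by `Φ`, so it is zero. Interpolating at the `z_i` with the `Q_j` (which vanish at `z_i` for
`i ≠ j` but not at `z_j`) and then fixing the top coefficient with `Φ` shows that `span {Φ, Q_j}`
is all of `∂⁻¹(Ω_log) ∩ K[x]_{≤ Mn}`. Its intersection with `ker ∂` thus consists of all `F` of
degree `≤ Mn` with `F' = 0`, which in characteristic `p` are the combinations of the `x^{lp}`;
since `Mn = akp + (M - k)` with `0 ≤ M - k < p`, there are `ak + 1` of those.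
-/

open Polynomial Finset

section CharP

variable {K : Type*} [Field K] (p : ℕ) [CharP K p]

theorem derivative_X_pow_mul_char (l : ℕ) : derivative (X ^ (l * p) : K[X]) = 0 := by
  rw [derivative_X_pow, Nat.cast_mul, CharP.cast_eq_zero K p, mul_zero, map_zero, zero_mul]

theorem mem_span_X_pow_mul_of_derivative_eq_zero {D : ℕ} {F : K[X]}
    (hdeg : F.natDegree ≤ D) (hder : derivative F = 0) :
    F ∈ Submodule.span K ((fun l : ℕ => (X : K[X]) ^ (l * p)) '' {l | l * p ≤ D}) := by
  have hcoeff : ∀ m, F.coeff m ≠ 0 → p ∣ m := by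
    intro m hm
    by_contra hpm
    obtain ⟨m, rfl⟩ : ∃ m', m = m' + 1 := Nat.exists_eq_succ_of_ne_zero (by rintro rfl; simp at hpm)
    have hcast : ((m + 1 : ℕ) : K) ≠ 0 := by rwa [Ne, CharP.cast_eq_zero_iff K p]
    have := coeff_derivative F m
    rw [hder, coeff_zero, eq_comm, mul_eq_zero] at this
    exact this.elim hm (by exact_mod_cast hcast)
  rw [F.as_sum_support_C_mul_X_pow]
  refine Submodule.sum_mem _ fun m hm => ?_
  obtain ⟨l, rfl⟩ := hcoeff m (mem_support_iff.mp hm)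
  rw [← smul_eq_C_mul, mul_comm]
  refine Submodule.smul_mem _ _ (Submodule.subset_span ⟨l, ?_, rfl⟩)
  rw [Set.mem_ofPred_eq, mul_comm]
  exact (le_natDegree_of_mem_supp _ hm).trans hdeg

theorem pow_dvd_of_isRoot_of_pow_sub_one_dvd_derivative {M : ℕ} (hMp : M ≤ p) {F : K[X]}
    {c : K} (hroot : F.IsRoot c) (hder : (X - C c) ^ (M - 1) ∣ derivative F) :
    (X - C c) ^ M ∣ F := by
  rcases eq_or_ne F 0 with rfl | hF
  · exact dvd_zero _
  rw [← le_rootMultiplicity_iff hF]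
  rcases Nat.eq_zero_or_pos M with rfl | hM
  · exact Nat.zero_le _
  suffices M - 1 < rootMultiplicity c F by omega
  refine lt_rootMultiplicity_of_isRoot_iterate_derivative_of_mem_nonZeroDivisors' hF ?_ ?_
  · rintro (_ | m) hm
    · exact hroot
    · rw [Function.iterate_succ_apply, ← dvd_iff_isRoot]
      exact (dvd_pow_self _ (by omega)).trans
        (pow_sub_dvd_iterate_derivative_of_pow_dvd m hder)
  · intro m hm hm0
    rw [mem_nonZeroDivisors_iff_ne_zero, Ne, CharP.cast_eq_zero_iff K p]
    exact fun h => absurd (Nat.le_of_dvd (Nat.pos_of_ne_zero hm0) h) (by omega)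

end CharP

theorem finrank_span_X_pow_mul {K : Type*} [Field K] {p : ℕ} (hp : 0 < p) (D : ℕ) :
    Module.finrank K (Submodule.span K
      ((fun l : ℕ => (X : K[X]) ^ (l * p)) '' {l | l * p ≤ D})) = D / p + 1 := by
  have himage : (fun l : ℕ => (X : K[X]) ^ (l * p)) '' {l | l * p ≤ D} =
      Set.range fun l : Fin (D / p + 1) => (X : K[X]) ^ (l.1 * p) := by
    ext F
    constructor
    · rintro ⟨l, hl, rfl⟩
      exact ⟨⟨l, Nat.lt_succ_of_le ((Nat.le_div_iff_mul_le hp).2 hl)⟩, rfl⟩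
    · rintro ⟨l, rfl⟩
      exact ⟨l, (Nat.le_div_iff_mul_le hp).1 (Nat.lt_succ_iff.1 l.2), rfl⟩
  have hli : LinearIndependent K fun l : Fin (D / p + 1) => (X : K[X]) ^ (l.1 * p) := by
    have := (basisMonomials K).linearIndependent.comp (fun l : Fin (D / p + 1) => l.1 * p)
      fun a b h => Fin.ext (Nat.eq_of_mul_eq_mul_right hp h)
    simpa only [coe_basisMonomials, Function.comp_def, monomial_one_right_eq_X_pow] using this
  rw [himage, finrank_span_eq_card hli, Fintype.card_fin]

section PhiQuot

variable {K : Type*} [Field K] {n M : ℕ} (z : Fin n → K)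

theorem phiQuot_dvd_prod (i : Fin n) (r : ℕ) :
    phiQuot n M z i r ∣ ∏ b : Fin n, (X - C (z b)) ^ M := by
  rw [← mul_prod_erase univ (fun b => (X - C (z b)) ^ M) (mem_univ i)]
  exact mul_dvd_mul_right (pow_dvd_pow _ (Nat.sub_le M r)) _

theorem monic_prod_X_sub_C_pow : (∏ b : Fin n, (X - C (z b)) ^ M).Monic :=
  monic_prod_of_monic _ _ fun b _ => (monic_X_sub_C (z b)).pow M

theorem natDegree_prod_X_sub_C_pow : (∏ b : Fin n, (X - C (z b)) ^ M).natDegree = M * n := by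
  rw [natDegree_prod _ _ fun b _ => pow_ne_zero _ (X_sub_C_ne_zero (z b))]
  simp [natDegree_pow, mul_comm]

theorem natDegree_phiQuot_le (i : Fin n) (r : ℕ) : (phiQuot n M z i r).natDegree ≤ M * n :=
  natDegree_prod_X_sub_C_pow z ▸
    natDegree_le_of_dvd (phiQuot_dvd_prod z i r) (monic_prod_X_sub_C_pow z).ne_zero

theorem isRoot_prod_X_sub_C_pow (hM : M ≠ 0) (j : Fin n) :
    (∏ b : Fin n, (X - C (z b)) ^ M).IsRoot (z j) := by
  rw [IsRoot.def, eval_prod]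
  exact prod_eq_zero (mem_univ j) (by simp [hM])

theorem isRoot_phiQuot_of_ne (hM : M ≠ 0) {i j : Fin n} (hij : j ≠ i) (r : ℕ) :
    (phiQuot n M z i r).IsRoot (z j) := by
  rw [IsRoot.def, phiQuot, eval_mul, eval_prod,
    prod_eq_zero (mem_erase.2 ⟨hij, mem_univ j⟩) (by simp [hM]), mul_zero]

theorem isRoot_phiQuot_self_of_lt (i : Fin n) {r : ℕ} (hr : r < M) :
    (phiQuot n M z i r).IsRoot (z i) := by
  simp [phiQuot, IsRoot, Nat.sub_ne_zero_of_lt hr]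

theorem eval_phiQuot_self_ne_zero (hz : Function.Injective z) (i : Fin n) :
    eval (z i) (phiQuot n M z i M) ≠ 0 := by
  rw [phiQuot, Nat.sub_self, pow_zero, one_mul, eval_prod, prod_ne_zero_iff]
  intro a ha
  rw [eval_pow, eval_sub, eval_X, eval_C]
  exact pow_ne_zero _ (sub_ne_zero.2 (hz.ne (mem_erase.1 ha).1.symm))

theorem pow_dvd_phiQuot_one (i j : Fin n) :
    (X - C (z i)) ^ (M - 1) ∣ phiQuot n M z j 1 := by
  rcases eq_or_ne i j with rfl | hij
  · exact dvd_mul_right _ _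
  · have hi : (X - C (z i)) ^ M ∣ ∏ a ∈ univ.erase j, (X - C (z a)) ^ M :=
      dvd_prod_of_mem (fun a => (X - C (z a)) ^ M) (mem_erase.2 ⟨hij, mem_univ i⟩)
    exact (pow_dvd_pow _ (Nat.sub_le M 1)).trans (hi.trans (dvd_mul_left _ _))

theorem pow_dvd_of_mem_span_phiQuot_one {G : K[X]}
    (hG : G ∈ Submodule.span K (Set.range fun j : Fin n => phiQuot n M z j 1)) (i : Fin n) :
    (X - C (z i)) ^ (M - 1) ∣ G := by
  induction hG using Submodule.span_induction with
  | mem _ h => obtain ⟨j, rfl⟩ := h; exact pow_dvd_phiQuot_one z i j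
  | zero => exact dvd_zero _
  | add _ _ _ _ h₁ h₂ => exact dvd_add h₁ h₂
  | smul c _ _ h => rw [smul_eq_C_mul]; exact dvd_mul_of_dvd_right h _

end PhiQuot

section DerivVanishingSpace

variable {K : Type*} [Field K] (n M : ℕ) (z : Fin n → K)

/-- The paper's `∂⁻¹(Ω_log) ∩ K[x]_{≤ Mn}`: for the derivative of a polynomial of degree `≤ Mn`,
lying in `Ω_log = span {Φ/(x - z_i)}` is the same as vanishing to order `M - 1` at every `z i`. -/
def derivVanishingSpace : Submodule K K[X] where
  carrier := {F | F.natDegree ≤ M * n ∧ ∀ i, (X - C (z i)) ^ (M - 1) ∣ derivative F}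
  add_mem' hF hG := ⟨natDegree_add_le_of_degree_le hF.1 hG.1, fun i => by
    rw [derivative_add]; exact dvd_add (hF.2 i) (hG.2 i)⟩
  zero_mem' := by simp
  smul_mem' c F hF := ⟨(natDegree_smul_le c F).trans hF.1, fun i => by
    rw [derivative_smul, smul_eq_C_mul]; exact dvd_mul_of_dvd_right (hF.2 i) _⟩

/-- The shape of the paper's `Q_j`: `Φ/(x - z_j)^M` plus a combination of `Φ/(x - z_j)^r`,
`1 ≤ r < M`. -/
def IsPhiQuotSum (j : Fin n) (Q : K[X]) : Prop :=
  ∃ A : Fin (M - 1) → K,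
    Q = phiQuot n M z j M + ∑ m : Fin (M - 1), C (A m) * phiQuot n M z j (m.1 + 1)

variable {n M z}

theorem prod_X_sub_C_pow_mem_derivVanishingSpace :
    ∏ b : Fin n, (X - C (z b)) ^ M ∈ derivVanishingSpace n M z :=
  ⟨(natDegree_prod_X_sub_C_pow z).le, fun i => pow_sub_one_dvd_derivative_of_pow_dvd <|
    dvd_prod_of_mem (fun b => (X - C (z b)) ^ M) (mem_univ i)⟩

namespace IsPhiQuotSum

variable {j : Fin n} {Q : K[X]}

theorem natDegree_le (hQ : IsPhiQuotSum n M z j Q) : Q.natDegree ≤ M * n := by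
  obtain ⟨A, rfl⟩ := hQ
  refine natDegree_add_le_of_degree_le (natDegree_phiQuot_le z j M) ?_
  refine natDegree_sum_le_of_forall_le _ _ fun m _ => ?_
  exact natDegree_C_mul_le _ _ |>.trans (natDegree_phiQuot_le z j _)

theorem isRoot_of_ne (hQ : IsPhiQuotSum n M z j Q) (hM : M ≠ 0) {i : Fin n} (hij : i ≠ j) :
    Q.IsRoot (z i) := by
  obtain ⟨A, rfl⟩ := hQ
  simp only [IsRoot.def, eval_add, eval_finsetSum, eval_mul,
    (isRoot_phiQuot_of_ne z hM hij _).eq_zero, mul_zero, sum_const_zero, add_zero]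

theorem eval_self_ne_zero (hQ : IsPhiQuotSum n M z j Q) (hz : Function.Injective z) :
    eval (z j) Q ≠ 0 := by
  obtain ⟨A, rfl⟩ := hQ
  have hlower : ∀ m : Fin (M - 1), (phiQuot n M z j (m.1 + 1)).IsRoot (z j) :=
    fun m => isRoot_phiQuot_self_of_lt z j (by omega)
  simpa only [eval_add, eval_finsetSum, eval_mul, (hlower _).eq_zero, mul_zero, sum_const_zero,
    add_zero] using eval_phiQuot_self_ne_zero z hz j

theorem mem_derivVanishingSpace (hQ : IsPhiQuotSum n M z j Q)
    (hQder : derivative Q ∈ Submodule.span K (Set.range fun i : Fin n => phiQuot n M z i 1)) :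
    Q ∈ derivVanishingSpace n M z :=
  ⟨hQ.natDegree_le, pow_dvd_of_mem_span_phiQuot_one z hQder⟩

end IsPhiQuotSum

variable (p : ℕ) [CharP K p]

theorem eq_zero_of_mem_derivVanishingSpace (hMp : M ≤ p) (hz : Function.Injective z)
    {F : K[X]} (hF : F ∈ derivVanishingSpace n M z) (hroot : ∀ i, F.IsRoot (z i))
    (hcoeff : F.coeff (M * n) = 0) : F = 0 := by
  have hdvd : ∏ b : Fin n, (X - C (z b)) ^ M ∣ F := by
    refine prod_dvd_of_coprime ?_ fun i _ =>
      pow_dvd_of_isRoot_of_pow_sub_one_dvd_derivative p hMp (hroot i) (hF.2 i)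
    exact ((pairwise_coprime_X_sub_C hz).mono fun i j h => h.pow).set_pairwise _
  have hFeq := eq_leadingCoeff_mul_of_monic_of_dvd_of_natDegree_le (monic_prod_X_sub_C_pow z)
    hdvd (hF.1.trans (natDegree_prod_X_sub_C_pow z).ge)
  rw [hFeq, coeff_C_mul, ← natDegree_prod_X_sub_C_pow z, (monic_prod_X_sub_C_pow z).coeff_natDegree,
    mul_one] at hcoeff
  rw [hFeq, hcoeff, C_0, zero_mul]

theorem derivVanishingSpace_le_span (hM : M ≠ 0) (hMp : M ≤ p) (hz : Function.Injective z)
    {Q : Fin n → K[X]} (hQ : ∀ j, Q j ∈ derivVanishingSpace n M z)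
    (hroot : ∀ i j, i ≠ j → (Q j).IsRoot (z i)) (hself : ∀ j, eval (z j) (Q j) ≠ 0) :
    derivVanishingSpace n M z ≤
      Submodule.span K ({∏ b : Fin n, (X - C (z b)) ^ M} ∪ Set.range Q) := by
  intro F hF
  set Φ := ∏ b : Fin n, (X - C (z b)) ^ M
  set G := F - ∑ j, (eval (z j) F / eval (z j) (Q j)) • Q j
  have hG : G ∈ derivVanishingSpace n M z :=
    sub_mem hF (sum_mem fun j _ => Submodule.smul_mem _ _ (hQ j))
  have hGroot : ∀ i, G.IsRoot (z i) := by
    intro i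
    rw [IsRoot.def, eval_sub, eval_finsetSum, sum_eq_single i
      (fun j _ hji => by rw [eval_smul, (hroot i j hji.symm).eq_zero, smul_zero])
      (fun h => absurd (mem_univ i) h), eval_smul, smul_eq_mul, div_mul_cancel₀ _ (hself i),
      sub_self]
  have hH : G - G.coeff (M * n) • Φ = 0 := by
    refine eq_zero_of_mem_derivVanishingSpace p hMp hz
      (sub_mem hG (Submodule.smul_mem _ _ prod_X_sub_C_pow_mem_derivVanishingSpace))
      (fun i => ?_) ?_
    · rw [IsRoot.def, eval_sub, (hGroot i).eq_zero, eval_smul,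
        (isRoot_prod_X_sub_C_pow z hM i).eq_zero, smul_zero, sub_zero]
    · rw [coeff_sub, coeff_smul, ← natDegree_prod_X_sub_C_pow z,
        (monic_prod_X_sub_C_pow z).coeff_natDegree, smul_eq_mul, mul_one, sub_self]
  have hFeq : F = ∑ j, (eval (z j) F / eval (z j) (Q j)) • Q j + G.coeff (M * n) • Φ := by
    rw [← sub_eq_zero, ← hH]
    simp only [G]
    abel
  rw [hFeq]
  refine add_mem (sum_mem fun j _ => Submodule.smul_mem _ _ ?_) (Submodule.smul_mem _ _ ?_)
  · exact Submodule.subset_span (Or.inr ⟨j, rfl⟩)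
  · exact Submodule.subset_span (Or.inl rfl)

theorem span_eq_derivVanishingSpace (hM : M ≠ 0) (hMp : M ≤ p) (hz : Function.Injective z)
    {Q : Fin n → K[X]} (hQform : ∀ j, IsPhiQuotSum n M z j (Q j))
    (hQder : ∀ j, derivative (Q j) ∈
      Submodule.span K (Set.range fun i : Fin n => phiQuot n M z i 1)) :
    Submodule.span K ({∏ b : Fin n, (X - C (z b)) ^ M} ∪ Set.range Q) =
      derivVanishingSpace n M z := by
  refine le_antisymm (Submodule.span_le.2 ?_) (derivVanishingSpace_le_span p hM hMp hz
    (fun j => (hQform j).mem_derivVanishingSpace (hQder j))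
    (fun i j hij => (hQform j).isRoot_of_ne hM hij) fun j => (hQform j).eval_self_ne_zero hz)
  rintro _ (rfl | ⟨j, rfl⟩)
  · exact prod_X_sub_C_pow_mem_derivVanishingSpace
  · exact (hQform j).mem_derivVanishingSpace (hQder j)

theorem derivVanishingSpace_inf_ker_derivative :
    derivVanishingSpace n M z ⊓ LinearMap.ker (derivative (R := K)) =
      Submodule.span K ((fun l : ℕ => (X : K[X]) ^ (l * p)) '' {l | l * p ≤ M * n}) := by
  refine le_antisymm (fun F hF => mem_span_X_pow_mul_of_derivative_eq_zero p hF.1.1 hF.2) ?_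
  rw [Submodule.span_le]
  rintro _ ⟨l, hl, rfl⟩
  have hder := derivative_X_pow_mul_char (K := K) p l
  refine ⟨⟨(natDegree_X_pow _).trans_le hl, fun i => ?_⟩, hder⟩
  rw [hder]
  exact dvd_zero _

end DerivVanishingSpace

theorem pos_lt_and_mul_div_eq_of_mul_eq {p q n k a M : ℕ} (hap : a * p = q * M + 1)
    (hn : n = k * q + 1) (hpn : n < p) (ha : 0 < a) (haq : a < q) :
    0 < M ∧ M < p ∧ M * n / p = a * k := by
  have hMp : M < p := by nlinarith
  have hkM : k ≤ M := by nlinarith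
  refine ⟨by nlinarith, hMp, ?_⟩
  have hMn : M * n = (M - k) + a * k * p := by
    zify [hkM] at hap hn ⊢
    rw [hn]
    linear_combination (-k : ℤ) * hap
  rw [hMn, Nat.add_mul_div_right _ _ (by omega), Nat.div_eq_of_lt (by omega), zero_add]

theorem stmt15_general (p q n k a M : ℕ) [Fact p.Prime]
    (hn : n = k * q + 1) (hpn : p > n)
    (ha1 : 1 ≤ a) (ha2 : a < q) (hdvd : q ∣ (a * p - 1))
    (hM : M = (a * p - 1) / q)
    (z : Fin n → FractionRing (MvPolynomial (Fin n) (ZMod p)))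
    (hzdef : z = fun j => algebraMap (MvPolynomial (Fin n) (ZMod p)) _
      (MvPolynomial.X j))
    (Q : Fin n → (FractionRing (MvPolynomial (Fin n) (ZMod p)))[X])
    (hQform : ∀ j, ∃ A : Fin (M - 1) → FractionRing (MvPolynomial (Fin n) (ZMod p)),
      Q j = phiQuot n M z j M +
        ∑ m : Fin (M - 1), C (A m) * phiQuot n M z j (m.1 + 1))
    (hQder : ∀ j, derivative (Q j)
      ∈ Submodule.span (FractionRing (MvPolynomial (Fin n) (ZMod p)))
        (Set.range fun i : Fin n => phiQuot n M z i 1)) :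
    (∀ F ∈ Submodule.span (FractionRing (MvPolynomial (Fin n) (ZMod p)))
        ({∏ b : Fin n, (X - C (z b)) ^ M} ∪ Set.range Q),
      (derivative F = 0 ↔
        F ∈ Submodule.span (FractionRing (MvPolynomial (Fin n) (ZMod p)))
          ((fun l : ℕ => (X : (FractionRing (MvPolynomial (Fin n) (ZMod p)))[X]) ^ (l * p))
            '' {l : ℕ | l * p ≤ M * n}))) ∧
    Module.finrank (FractionRing (MvPolynomial (Fin n) (ZMod p)))
      ↥(Submodule.span (FractionRing (MvPolynomial (Fin n) (ZMod p)))
          ({∏ b : Fin n, (X - C (z b)) ^ M} ∪ Set.range Q) ⊓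
        LinearMap.ker (Polynomial.derivative
          (R := FractionRing (MvPolynomial (Fin n) (ZMod p)))))
      = a * k + 1 := by
  have hp : p.Prime := Fact.out
  have hap : a * p = q * M + 1 := by
    have := Nat.mul_div_cancel' hdvd
    rw [← hM] at this
    have := Nat.mul_le_mul ha1 hp.one_le
    omega
  obtain ⟨hM0, hMp, hMn⟩ := pos_lt_and_mul_div_eq_of_mul_eq hap hn hpn ha1 ha2
  have : CharP (FractionRing (MvPolynomial (Fin n) (ZMod p))) p :=
    charP_of_injective_algebraMap (IsFractionRing.injective (MvPolynomial (Fin n) (ZMod p)) _) p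
  have hz : Function.Injective z := hzdef ▸
    (IsFractionRing.injective (MvPolynomial (Fin n) (ZMod p)) _).comp MvPolynomial.X_injective
  have hspan := span_eq_derivVanishingSpace p hM0.ne' hMp.le hz hQform hQder
  refine ⟨fun F hF => ?_, ?_⟩
  · rw [hspan] at hF
    rw [← derivVanishingSpace_inf_ker_derivative p, Submodule.mem_inf, LinearMap.mem_ker]
    exact ⟨fun h => ⟨hF, h⟩, And.right⟩
  · rw [hspan, derivVanishingSpace_inf_ker_derivative, finrank_span_X_pow_mul hp.pos, hMn]

/-- Over `𝔽_p(z)`, let `𝒬` be the `(n+1)`-dimensional space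
spanned by `Φ` and the polynomials `Q_1,…,Q_n`.  For `F ∈ 𝒬`, `∂F/∂x = 0` iff
`F` lies in the span of the monomials `x^{lp}` with `lp ≤ Mn`; in particular
the kernel of `∂/∂x` restricted to `𝒬` has dimension `ak + 1`. -/
theorem stmt15 (p q n k a M : ℕ) [Fact p.Prime] (hq : q.Prime)
    (hk : 0 < k) (hn : n = k * q + 1) (hpn : p > n) (hpq : p > q)
    (ha1 : 1 ≤ a) (ha2 : a < q) (hdvd : q ∣ (a * p - 1))
    (hM : M = (a * p - 1) / q)
    (z : Fin n → FractionRing (MvPolynomial (Fin n) (ZMod p)))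
    (hzdef : z = fun j => algebraMap (MvPolynomial (Fin n) (ZMod p)) _
      (MvPolynomial.X j))
    (Q : Fin n → (FractionRing (MvPolynomial (Fin n) (ZMod p)))[X])
    (hQform : ∀ j, ∃ A : Fin (M - 1) → FractionRing (MvPolynomial (Fin n) (ZMod p)),
      Q j = phiQuot n M z j M +
        ∑ m : Fin (M - 1), C (A m) * phiQuot n M z j (m.1 + 1))
    (hQder : ∀ j, derivative (Q j)
      ∈ Submodule.span (FractionRing (MvPolynomial (Fin n) (ZMod p)))
        (Set.range fun i : Fin n => phiQuot n M z i 1)) :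
    (∀ F ∈ Submodule.span (FractionRing (MvPolynomial (Fin n) (ZMod p)))
        ({∏ b : Fin n, (X - C (z b)) ^ M} ∪ Set.range Q),
      (derivative F = 0 ↔
        F ∈ Submodule.span (FractionRing (MvPolynomial (Fin n) (ZMod p)))
          ((fun l : ℕ => (X : (FractionRing (MvPolynomial (Fin n) (ZMod p)))[X]) ^ (l * p))
            '' {l : ℕ | l * p ≤ M * n}))) ∧
    Module.finrank (FractionRing (MvPolynomial (Fin n) (ZMod p)))
      ↥(Submodule.span (FractionRing (MvPolynomial (Fin n) (ZMod p)))
          ({∏ b : Fin n, (X - C (z b)) ^ M} ∪ Set.range Q) ⊓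
        LinearMap.ker (Polynomial.derivative
          (R := FractionRing (MvPolynomial (Fin n) (ZMod p)))))
      = a * k + 1 :=
  stmt15_general p q n k a M hn hpn ha1 ha2 hdvd hM z hzdef Q hQform hQder
end
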